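/- Let f be a Schwartz function on ℝ with support contained in [0, ∞), and define f^+(θ) = i e^θ ∫_ℝ f(u) e^{iu e^θ} du for θ ∈ ℝ. Then f^+ extends to a bounded analytic function on the strip 0 < Im θ < π, continuous up to the boundary, with boundary value f^+(θ + iπ) = -i e^θ ∫_ℝ f(u) e^{-iu e^θ} du = f^-(θ) for real θ. -/

import Mathlib

/-!
Write `f⁺(z) = i eᶻ L f (eᶻ)` with `L g w = ∫ g(u) e^{iuw} du`. The strip `0 ≤ Im z ≤ π` is mapped
by `exp` into the closed upper half-plane, where `|e^{iuw}| = e^{-u Im w} ≤ 1` on the support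
`u ≥ 0` of `g`; so `L g` is continuous there (dominated by `|g|`) and holomorphic in the open
half-plane (dominated by `|u g(u)|`). The factor `eᶻ` is unbounded, but integration by parts gives
`i w L f (w) = -L f' (w)`, hence `|f⁺| ≤ ‖f'‖₁` on the strip. At `Im z = π`, `e^{θ + iπ} = -e^θ`.
-/

open MeasureTheory Filter Complex Topology

noncomputable def fourierLaplace (g : ℝ → ℂ) (w : ℂ) : ℂ :=
  ∫ u : ℝ, g u * cexp (I * u * w)

lemma norm_cexp_I_mul_le_one {w : ℂ} (hw : 0 ≤ w.im) {u : ℝ} (hu : 0 ≤ u) :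
    ‖cexp (I * u * w)‖ ≤ 1 := by
  rw [norm_exp, Real.exp_le_one_iff]
  simpa [mul_re, mul_im] using mul_nonneg hu hw

section FourierLaplace

variable {g : ℝ → ℂ} {w : ℂ}

lemma norm_mul_cexp_I_mul_le (hg0 : ∀ u < 0, g u = 0) (hw : 0 ≤ w.im) (u : ℝ) :
    ‖g u * cexp (I * u * w)‖ ≤ ‖g u‖ := by
  rcases lt_or_ge u 0 with hu | hu
  · simp [hg0 u hu]
  · rw [norm_mul]
    exact mul_le_of_le_one_right (norm_nonneg _) (norm_cexp_I_mul_le_one hw hu)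

lemma integrable_mul_cexp_I_mul (hg : Integrable g) (hg0 : ∀ u < 0, g u = 0) (hw : 0 ≤ w.im) :
    Integrable fun u : ℝ ↦ g u * cexp (I * u * w) :=
  hg.norm.mono' (hg.aestronglyMeasurable.mul (by fun_prop))
    (.of_forall (norm_mul_cexp_I_mul_le hg0 hw))

lemma norm_fourierLaplace_le (hg : Integrable g) (hg0 : ∀ u < 0, g u = 0) (hw : 0 ≤ w.im) :
    ‖fourierLaplace g w‖ ≤ ∫ u, ‖g u‖ :=
  norm_integral_le_of_norm_le hg.norm (.of_forall (norm_mul_cexp_I_mul_le hg0 hw))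

lemma continuousOn_fourierLaplace (hg : Integrable g) (hg0 : ∀ u < 0, g u = 0) :
    ContinuousOn (fourierLaplace g) {w | 0 ≤ w.im} :=
  continuousOn_of_dominated (fun _ _ ↦ hg.aestronglyMeasurable.mul (by fun_prop))
    (fun _ hw ↦ .of_forall (norm_mul_cexp_I_mul_le hg0 hw)) hg.norm
    (.of_forall fun _ ↦ by fun_prop)

lemma differentiableOn_fourierLaplace (hg : Integrable g)
    (hg1 : Integrable fun u : ℝ ↦ ‖u‖ * ‖g u‖) (hg0 : ∀ u < 0, g u = 0) :
    DifferentiableOn ℂ (fourierLaplace g) {w | 0 < w.im} := by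
  intro w₀ hw₀
  have hopen : IsOpen {w : ℂ | 0 < w.im} := isOpen_lt continuous_const continuous_im
  have hbound : ∀ᵐ u : ℝ, ∀ w ∈ {w : ℂ | 0 < w.im},
      ‖g u * (I * u * cexp (I * u * w))‖ ≤ ‖u‖ * ‖g u‖ := by
    refine .of_forall fun u w hw ↦ ?_
    rcases lt_or_ge u 0 with hu | hu
    · simp [hg0 u hu]
    · calc ‖g u * (I * u * cexp (I * u * w))‖
          = ‖u‖ * ‖g u‖ * ‖cexp (I * u * w)‖ := by
            simp only [norm_mul, norm_I, norm_real, one_mul]; ring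
        _ ≤ ‖u‖ * ‖g u‖ := mul_le_of_le_one_right (by positivity)
            (norm_cexp_I_mul_le_one (le_of_lt hw) hu)
  have hderiv : ∀ᵐ u : ℝ, ∀ w ∈ {w : ℂ | 0 < w.im}, HasDerivAt
      (fun w ↦ g u * cexp (I * u * w)) (g u * (I * u * cexp (I * u * w))) w := by
    refine .of_forall fun u w _ ↦ ?_
    simpa [mul_comm] using (((hasDerivAt_id w).const_mul (I * u)).cexp).const_mul (g u)
  exact (hasDerivAt_integral_of_dominated_loc_of_deriv_le (hopen.mem_nhds hw₀)
    (.of_forall fun _ ↦ hg.aestronglyMeasurable.mul (by fun_prop))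
    (integrable_mul_cexp_I_mul hg hg0 (le_of_lt hw₀))
    (hg.aestronglyMeasurable.mul (by fun_prop)) hbound hg1 hderiv).2.differentiableAt
    |>.differentiableWithinAt

lemma deriv_eq_zero_of_lt_zero (hg0 : ∀ u < 0, g u = 0) {u : ℝ} (hu : u < 0) :
    deriv g u = 0 := by
  have : g =ᶠ[𝓝 u] fun _ ↦ 0 := eventually_of_mem (Iio_mem_nhds hu) hg0
  simp [this.deriv_eq]

lemma I_mul_mul_fourierLaplace (hg : Differentiable ℝ g) (hgi : Integrable g)
    (hg'i : Integrable (deriv g)) (hg0 : ∀ u < 0, g u = 0) (hw : 0 ≤ w.im) :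
    I * w * fourierLaplace g w = -fourierLaplace (deriv g) w := by
  have hderiv : ∀ u : ℝ, HasDerivAt (fun u : ℝ ↦ g u * cexp (I * u * w))
      (deriv g u * cexp (I * u * w) + I * w * (g u * cexp (I * u * w))) u := by
    intro u
    have he : HasDerivAt (fun u : ℝ ↦ cexp (I * u * w)) (I * w * cexp (I * u * w)) u := by
      simpa [mul_comm, mul_left_comm] using
        ((((hasDerivAt_id (u : ℂ)).const_mul I).mul_const w).cexp).comp_ofReal
    exact ((hg u).hasDerivAt.mul he).congr_deriv (by ring)
  have hint := integrable_mul_cexp_I_mul hgi hg0 hw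
  have hint' := integrable_mul_cexp_I_mul hg'i (fun _ ↦ deriv_eq_zero_of_lt_zero hg0) hw
  have hzero := integral_eq_zero_of_hasDerivAt_of_integrable hderiv
    (hint'.add (hint.const_mul _)) hint
  rw [integral_add hint' (hint.const_mul _), integral_const_mul] at hzero
  unfold fourierLaplace
  linear_combination hzero

end FourierLaplace

lemma im_exp_nonneg {z : ℂ} (h₀ : 0 ≤ z.im) (hπ : z.im ≤ Real.pi) : 0 ≤ (cexp z).im := by
  rw [exp_im]
  exact mul_nonneg (Real.exp_pos _).le (Real.sin_nonneg_of_nonneg_of_le_pi h₀ hπ)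

lemma im_exp_pos {z : ℂ} (h₀ : 0 < z.im) (hπ : z.im < Real.pi) : 0 < (cexp z).im := by
  rw [exp_im]
  exact mul_pos (Real.exp_pos _) (Real.sin_pos_of_pos_of_lt_pi h₀ hπ)

/-- Let `f` be a Schwartz function on `ℝ` supported in `[0, ∞)`, and let
`f⁺(z) = i e^z ∫ f(u) e^{iu e^z} du`.  Then `f⁺` is analytic on the open strip
`0 < Im z < π`, continuous and bounded on the closed strip `0 ≤ Im z ≤ π`, and its
boundary value at `Im z = π` is `f⁺(θ + iπ) = -i e^θ ∫ f(u) e^{-iu e^θ} du = f⁻(θ)`. -/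
theorem stmt_18 (f : SchwartzMap ℝ ℂ) (hsupp : ∀ u : ℝ, u < 0 → f u = 0)
    (Fp : ℂ → ℂ)
    (hFp : ∀ z : ℂ, Fp z = Complex.I * Complex.exp z *
      ∫ u : ℝ, f u * Complex.exp (Complex.I * u * Complex.exp z)) :
    DifferentiableOn ℂ Fp {z : ℂ | 0 < z.im ∧ z.im < Real.pi} ∧
    ContinuousOn Fp {z : ℂ | 0 ≤ z.im ∧ z.im ≤ Real.pi} ∧
    (∃ C : ℝ, ∀ z ∈ {z : ℂ | 0 ≤ z.im ∧ z.im ≤ Real.pi}, ‖Fp z‖ ≤ C) ∧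
    (∀ θ : ℝ, Fp (θ + Real.pi * Complex.I) =
      -Complex.I * Complex.exp θ *
        ∫ u : ℝ, f u * Complex.exp (-Complex.I * u * Complex.exp θ)) := by
  have hFp' : Fp = fun z ↦ I * cexp z * fourierLaplace f (cexp z) := funext hFp
  have hf'i : Integrable (deriv f) := (SchwartzMap.derivCLM ℝ ℂ f).integrable
  refine ⟨?_, ?_, ⟨∫ u, ‖deriv f u‖, fun z hz ↦ ?_⟩, fun θ ↦ ?_⟩
  · rw [hFp']
    exact (differentiable_exp.const_mul I).differentiableOn.mul <|
      (differentiableOn_fourierLaplace f.integrable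
        (by simpa using f.integrable_pow_mul volume 1) hsupp).comp
        differentiable_exp.differentiableOn fun z hz ↦ im_exp_pos hz.1 hz.2
  · rw [hFp']
    exact (continuous_const.mul continuous_exp).continuousOn.mul <|
      (continuousOn_fourierLaplace f.integrable hsupp).comp continuous_exp.continuousOn
        fun z hz ↦ im_exp_nonneg hz.1 hz.2
  · have hw := im_exp_nonneg hz.1 hz.2
    rw [hFp z]
    change ‖I * cexp z * fourierLaplace f (cexp z)‖ ≤ _
    rw [I_mul_mul_fourierLaplace f.differentiable f.integrable hf'i hsupp hw, norm_neg]
    exact norm_fourierLaplace_le hf'i (fun _ ↦ deriv_eq_zero_of_lt_zero hsupp) hw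
  · have he : cexp (θ + Real.pi * I) = -cexp θ := by
      rw [exp_add, exp_pi_mul_I, mul_neg_one]
    simp only [hFp, he, neg_mul, mul_neg]
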